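/- arXiv:1610.09783 — 4 statements merged into one kernel-verified Lean document; each statement's English description precedes it below -/
import Mathlib

section
/- Let M be a mixed graph of order n ≥ 3 with no isolated vertices. Then √(2n/(n-1)) ≤ E_{R_H}(M) ≤ n. -/
/-!
The eigenvalues `μᵢ` of `R_H(M)` are real, with `∑ μᵢ = tr R_H = 0` and
`∑ μᵢ² = tr R_H² = 2 R₋₁`. Because the `μᵢ` sum to zero, each `|μⱼ|` is at most the sum of the
other `|μᵢ|`, so `2|μⱼ| ≤ E` and hence `2 ∑ μᵢ² ≤ E²`; Cauchy–Schwarz gives `E² ≤ n ∑ μᵢ²`.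
Both bounds then follow from `n/(n-1) ≤ 2 R₋₁ ≤ n`, read off row by row: vertex `k` contributes
`∑_{l ∼ k} 1/(d_k d_l)`, which lies between `1/(n-1)` and `1` since `1 ≤ d_l ≤ n - 1`.
-/

open Matrix BigOperators

noncomputable section
open scoped Classical

/-- A mixed graph on vertex set `V`, encoded by its Hermitian-adjacency matrix:
entries are `1` for undirected edges, `i`/`-i` for arcs, `0` otherwise. -/
structure MixedGraph (V : Type) [Fintype V] [DecidableEq V] where
  h : Matrix V V ℂ
  herm : h.IsHermitian
  loopless : ∀ k, h k k = 0
  entries : ∀ k l, h k l = 0 ∨ h k l = 1 ∨ h k l = Complex.I ∨ h k l = -Complex.I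

namespace MixedGraph

variable {V : Type} [Fintype V] [DecidableEq V]

/-- Degree of a vertex in the underlying graph. -/
def deg (M : MixedGraph V) (k : V) : ℕ :=
  (Finset.univ.filter fun l => M.h k l ≠ 0).card

/-- The Hermitian–Randić matrix of a mixed graph. -/
def RH (M : MixedGraph V) : Matrix V V ℂ :=
  fun k l => M.h k l / ((Real.sqrt (M.deg k) * Real.sqrt (M.deg l) : ℝ) : ℂ)

theorem RH_isHermitian (M : MixedGraph V) : (M.RH).IsHermitian := by
  ext k l
  simp only [RH, Matrix.conjTranspose_apply, star_div₀, Complex.star_def,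
    Complex.conj_ofReal, M.herm.apply k l, mul_comm (Real.sqrt (M.deg l))]

/-- The Hermitian–Randić energy: sum of absolute values of the eigenvalues of `RH`. -/
def energyRH (M : MixedGraph V) : ℝ := ∑ i, |M.RH_isHermitian.eigenvalues i|

/-- The Hermitian energy: sum of absolute values of the eigenvalues of `H(M)`. -/
def energyH (M : MixedGraph V) : ℝ := ∑ i, |M.herm.eigenvalues i|

/-- The general Randić index `R₋₁` of the underlying graph. -/
def Rm1 (M : MixedGraph V) : ℝ :=
  (1 / 2) * ∑ k, ∑ l, if M.h k l ≠ 0 then ((M.deg k : ℝ) * (M.deg l : ℝ))⁻¹ else 0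

/-- The underlying simple graph of a mixed graph. -/
def underlying (M : MixedGraph V) : SimpleGraph V where
  Adj k l := M.h k l ≠ 0
  symm := ⟨by
    intro k l hkl h0
    exact hkl (by rw [← M.herm.apply k l, h0, star_zero])⟩
  loopless := ⟨fun k hk => hk (M.loopless k)⟩

end MixedGraph

theorem Matrix.IsHermitian.trace_mul_self_eq_sum_sq_eigenvalues {𝕜 n : Type*} [RCLike 𝕜]
    [Fintype n] [DecidableEq n] {A : Matrix n n 𝕜} (hA : A.IsHermitian) :
    (A * A).trace = ∑ i, (hA.eigenvalues i : 𝕜) ^ 2 := by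
  conv_lhs => rw [hA.spectral_theorem, ← map_mul, Unitary.conjStarAlgAut_apply, trace_mul_cycle,
    Unitary.coe_star_mul_self, one_mul, diagonal_mul_diagonal, trace_diagonal]
  simp [sq]

namespace Finset

variable {ι : Type*} {s : Finset ι} {f : ι → ℝ}

theorem two_mul_abs_le_sum_abs_of_sum_eq_zero (hf : ∑ i ∈ s, f i = 0) {j : ι} (hj : j ∈ s) :
    2 * |f j| ≤ ∑ i ∈ s, |f i| := by
  classical
  rw [← add_sum_erase s _ hj] at hf ⊢
  have : |f j| ≤ ∑ i ∈ s.erase j, |f i| := by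
    rw [eq_neg_of_add_eq_zero_left hf, abs_neg]
    exact abs_sum_le_sum_abs _ _
  linarith

theorem sqrt_two_mul_sum_sq_le_sum_abs_of_sum_eq_zero (hf : ∑ i ∈ s, f i = 0) :
    √(2 * ∑ i ∈ s, f i ^ 2) ≤ ∑ i ∈ s, |f i| := by
  refine (Real.sqrt_le_left (sum_nonneg fun i _ => abs_nonneg _)).2 ?_
  calc 2 * ∑ i ∈ s, f i ^ 2 = ∑ i ∈ s, |f i| * (2 * |f i|) := by
        rw [mul_sum]; congr! 1 with i; rw [← sq_abs]; ring
    _ ≤ ∑ i ∈ s, |f i| * ∑ i ∈ s, |f i| :=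
        sum_le_sum fun i hi => mul_le_mul_of_nonneg_left
          (two_mul_abs_le_sum_abs_of_sum_eq_zero hf hi) (abs_nonneg _)
    _ = (∑ i ∈ s, |f i|) ^ 2 := by rw [← sum_mul, sq]

theorem sum_abs_le_sqrt_card_mul_sum_sq : ∑ i ∈ s, |f i| ≤ √(#s * ∑ i ∈ s, f i ^ 2) := by
  refine Real.le_sqrt_of_sq_le ?_
  simpa only [sq_abs] using sq_sum_le_card_mul_sum_sq (s := s) (f := fun i => |f i|)

end Finset

namespace MixedGraph

variable {V : Type} [Fintype V] [DecidableEq V] (M : MixedGraph V)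

def neighbors (k : V) : Finset V := Finset.univ.filter fun l => M.h k l ≠ 0

theorem card_neighbors (k : V) : (M.neighbors k).card = M.deg k := rfl

theorem mem_neighbors {k l : V} : l ∈ M.neighbors k ↔ M.h k l ≠ 0 := by
  simp [neighbors]

theorem mem_neighbors_comm {k l : V} : l ∈ M.neighbors k ↔ k ∈ M.neighbors l := by
  simp only [mem_neighbors]
  exact M.underlying.adj_comm k l

theorem deg_pos_of_mem_neighbors {k l : V} (h : l ∈ M.neighbors k) : 0 < M.deg k :=
  Finset.card_pos.mpr ⟨l, h⟩

theorem deg_lt_card (k : V) : M.deg k < Fintype.card V :=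
  Finset.card_lt_univ_of_notMem (x := k) (by simp [M.loopless])

theorem normSq_RH (k l : V) :
    Complex.normSq (M.RH k l) =
      if M.h k l ≠ 0 then ((M.deg k : ℝ) * (M.deg l : ℝ))⁻¹ else 0 := by
  split_ifs with hkl
  · have hk := M.deg_pos_of_mem_neighbors ((M.mem_neighbors).2 hkl)
    have hl := M.deg_pos_of_mem_neighbors ((M.mem_neighbors_comm).1 ((M.mem_neighbors).2 hkl))
    have hunit : Complex.normSq (M.h k l) = 1 := by
      rcases M.entries k l with h | h | h | h <;> simp_all
    rw [RH, Complex.normSq_div, Complex.normSq_ofReal, hunit, mul_mul_mul_comm,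
      Real.mul_self_sqrt (by positivity), Real.mul_self_sqrt (by positivity), one_div]
  · simp [RH, not_not.1 hkl]

theorem trace_RH : M.RH.trace = 0 := by
  simp [Matrix.trace, RH, M.loopless]

theorem trace_RH_mul_self : (M.RH * M.RH).trace = ((2 * M.Rm1 : ℝ) : ℂ) := by
  have hentry (k l : V) : M.RH k l * M.RH l k = (Complex.normSq (M.RH k l) : ℂ) := by
    rw [← M.RH_isHermitian.apply l k, Complex.star_def, Complex.mul_conj]
  simp only [Matrix.trace, Matrix.diag, Matrix.mul_apply, hentry, normSq_RH, Rm1]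
  push_cast
  ring

theorem sum_eigenvalues_RH : ∑ i, M.RH_isHermitian.eigenvalues i = 0 := by
  have := M.RH_isHermitian.trace_eq_sum_eigenvalues.symm.trans M.trace_RH
  exact Complex.ofReal_injective (by simpa using this)

theorem sum_sq_eigenvalues_RH : ∑ i, M.RH_isHermitian.eigenvalues i ^ 2 = 2 * M.Rm1 := by
  have := M.RH_isHermitian.trace_mul_self_eq_sum_sq_eigenvalues.symm.trans M.trace_RH_mul_self
  exact Complex.ofReal_injective (by simpa using this)

theorem two_mul_Rm1_eq_sum_neighbors :
    2 * M.Rm1 = ∑ k, ∑ l ∈ M.neighbors k, ((M.deg k : ℝ) * (M.deg l : ℝ))⁻¹ := by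
  simp only [Rm1, neighbors, Finset.sum_filter]
  ring

theorem inv_card_sub_one_le_sum_neighbors {k : V} (hk : M.deg k ≠ 0) :
    ((Fintype.card V : ℝ) - 1)⁻¹ ≤ ∑ l ∈ M.neighbors k, ((M.deg k : ℝ) * (M.deg l : ℝ))⁻¹ := by
  have hk' : (0 : ℝ) < M.deg k := by exact_mod_cast Nat.pos_of_ne_zero hk
  calc ((Fintype.card V : ℝ) - 1)⁻¹
      = ∑ l ∈ M.neighbors k, ((M.deg k : ℝ) * ((Fintype.card V : ℝ) - 1))⁻¹ := by
        rw [Finset.sum_const, card_neighbors, nsmul_eq_mul, mul_inv, ← mul_assoc,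
          mul_inv_cancel₀ hk'.ne', one_mul]
    _ ≤ ∑ l ∈ M.neighbors k, ((M.deg k : ℝ) * (M.deg l : ℝ))⁻¹ := by
        refine Finset.sum_le_sum fun l hl => inv_anti₀ ?_ ?_
        · have : (0 : ℝ) < M.deg l :=
            by exact_mod_cast M.deg_pos_of_mem_neighbors ((M.mem_neighbors_comm).1 hl)
          positivity
        · have : (M.deg l : ℝ) + 1 ≤ Fintype.card V := by exact_mod_cast M.deg_lt_card l
          gcongr
          linarith

theorem sum_neighbors_le_one (k : V) :
    ∑ l ∈ M.neighbors k, ((M.deg k : ℝ) * (M.deg l : ℝ))⁻¹ ≤ 1 := by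
  calc ∑ l ∈ M.neighbors k, ((M.deg k : ℝ) * (M.deg l : ℝ))⁻¹
      ≤ ∑ l ∈ M.neighbors k, (M.deg k : ℝ)⁻¹ := by
        refine Finset.sum_le_sum fun l hl => ?_
        have hk : (0 : ℝ) < M.deg k := by exact_mod_cast M.deg_pos_of_mem_neighbors hl
        have hl : (1 : ℝ) ≤ M.deg l :=
          by exact_mod_cast M.deg_pos_of_mem_neighbors ((M.mem_neighbors_comm).1 hl)
        exact inv_anti₀ hk (le_mul_of_one_le_right hk.le hl)
    _ = (M.deg k : ℝ) * (M.deg k : ℝ)⁻¹ := by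
        rw [Finset.sum_const, card_neighbors, nsmul_eq_mul]
    _ ≤ 1 := mul_inv_le_one

theorem card_div_card_sub_one_le_two_mul_Rm1 (hiso : ∀ k, M.deg k ≠ 0) :
    (Fintype.card V : ℝ) / ((Fintype.card V : ℝ) - 1) ≤ 2 * M.Rm1 := by
  rw [two_mul_Rm1_eq_sum_neighbors, div_eq_mul_inv, ← nsmul_eq_mul, ← Finset.card_univ,
    ← Finset.sum_const]
  exact Finset.sum_le_sum fun k _ => M.inv_card_sub_one_le_sum_neighbors (hiso k)

theorem two_mul_Rm1_le_card : 2 * M.Rm1 ≤ Fintype.card V := by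
  rw [two_mul_Rm1_eq_sum_neighbors, ← Finset.card_univ, ← nsmul_one, ← Finset.sum_const]
  exact Finset.sum_le_sum fun k _ => M.sum_neighbors_le_one k

end MixedGraph

theorem energyRH_order_bounds_general {V : Type} [Fintype V] [DecidableEq V]
    (M : MixedGraph V) (hiso : ∀ k, M.deg k ≠ 0) :
    Real.sqrt (2 * (Fintype.card V : ℝ) / ((Fintype.card V : ℝ) - 1)) ≤ M.energyRH ∧
      M.energyRH ≤ (Fintype.card V : ℝ) := by
  have hsum := M.sum_eigenvalues_RH
  have hsq := M.sum_sq_eigenvalues_RH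
  have hlow := M.card_div_card_sub_one_le_two_mul_Rm1 hiso
  have hup := M.two_mul_Rm1_le_card
  constructor
  · calc √(2 * (Fintype.card V : ℝ) / ((Fintype.card V : ℝ) - 1))
        ≤ √(2 * ∑ i, M.RH_isHermitian.eigenvalues i ^ 2) := by
          rw [hsq, mul_div_assoc]; gcongr
      _ ≤ M.energyRH := Finset.sqrt_two_mul_sum_sq_le_sum_abs_of_sum_eq_zero hsum
  · calc M.energyRH ≤ √(Fintype.card V * ∑ i, M.RH_isHermitian.eigenvalues i ^ 2) :=
          Finset.sum_abs_le_sqrt_card_mul_sum_sq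
      _ ≤ √(Fintype.card V * Fintype.card V) := by rw [hsq]; gcongr
      _ = Fintype.card V := Real.sqrt_mul_self (Nat.cast_nonneg _)

/-- for a mixed graph of order `n ≥ 3` with no isolated vertices,
`√(2n/(n-1)) ≤ E_{R_H}(M) ≤ n`. -/
theorem energyRH_order_bounds {V : Type} [Fintype V] [DecidableEq V]
    (M : MixedGraph V) (hn : 3 ≤ Fintype.card V) (hiso : ∀ k, M.deg k ≠ 0) :
    Real.sqrt (2 * (Fintype.card V : ℝ) / ((Fintype.card V : ℝ) - 1)) ≤ M.energyRH ∧
      M.energyRH ≤ (Fintype.card V : ℝ) :=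
  energyRH_order_bounds_general M hiso
end
end

section
/- Let M be a mixed graph of order n with underlying graph M_U, and let μ_1 ≥ ⋯ ≥ μ_n be the eigenvalues of R_H(M). Set α = min_i |μ_i| and β = max{μ_1, |μ_n|}. If α + β > 0, then E_{R_H}(M) ≥ (2R_{-1}(M_U) + nαβ)/(α + β). -/
open Matrix BigOperators

noncomputable section
open scoped Classical

/-!
Every eigenvalue `μ` of `R_H(M)` satisfies `α ≤ |μ| ≤ β`, so `(|μ| - α)(β - |μ|) ≥ 0`, i.e.
`μ² + αβ ≤ (α + β)|μ|`. Summing over the spectrum and using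
`∑ μᵢ² = tr(R_H²) = ∑_{k,l} |(R_H)_{kl}|² = 2R₋₁(M_U)` gives the bound.
-/

theorem sq_add_mul_le_add_mul_abs {R : Type*} [CommRing R] [LinearOrder R] [IsStrictOrderedRing R]
    {a b x : R} (ha : a ≤ |x|) (hb : |x| ≤ b) : x ^ 2 + a * b ≤ (a + b) * |x| := by
  nlinarith [mul_nonneg (sub_nonneg.2 ha) (sub_nonneg.2 hb), sq_abs x]

theorem sum_sq_add_card_mul_le_mul_sum_abs {ι R : Type*} [Fintype ι] [CommRing R] [LinearOrder R]
    [IsStrictOrderedRing R] {a b : R} (f : ι → R) (ha : ∀ i, a ≤ |f i|) (hb : ∀ i, |f i| ≤ b) :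
    ∑ i, f i ^ 2 + Fintype.card ι * a * b ≤ (a + b) * ∑ i, |f i| := by
  calc ∑ i, f i ^ 2 + Fintype.card ι * a * b = ∑ i, (f i ^ 2 + a * b) := by
        rw [Finset.sum_add_distrib, Finset.sum_const, Finset.card_univ, nsmul_eq_mul, mul_assoc]
    _ ≤ ∑ i, (a + b) * |f i| :=
        Finset.sum_le_sum fun i _ => sq_add_mul_le_add_mul_abs (ha i) (hb i)
    _ = (a + b) * ∑ i, |f i| := (Finset.mul_sum ..).symm

namespace Matrix.IsHermitian

variable {𝕜 n : Type*} [RCLike 𝕜] [Fintype n] [DecidableEq n] {A : Matrix n n 𝕜}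

theorem trace_mul_self (hA : A.IsHermitian) :
    (A * A).trace = ∑ i, (hA.eigenvalues i : 𝕜) ^ 2 := by
  conv_lhs => rw [hA.spectral_theorem, ← map_mul, Unitary.conjStarAlgAut_apply, trace_mul_cycle,
    Unitary.coe_star_mul_self, one_mul, diagonal_mul_diagonal, trace_diagonal]
  simp [sq]

theorem sum_sq_eigenvalues (hA : A.IsHermitian) :
    ∑ i, hA.eigenvalues i ^ 2 = ∑ k, ∑ l, ‖A k l‖ ^ 2 := by
  have h : (A * A).trace = ∑ k, ∑ l, (‖A k l‖ ^ 2 : 𝕜) := by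
    simp only [trace, diag, mul_apply]
    refine Finset.sum_congr rfl fun k _ => Finset.sum_congr rfl fun l _ => ?_
    rw [← hA.apply l k, RCLike.star_def, RCLike.mul_conj]
  rw [hA.trace_mul_self] at h
  exact_mod_cast h

end Matrix.IsHermitian

namespace MixedGraph

variable {V : Type} [Fintype V] [DecidableEq V] (M : MixedGraph V)

theorem norm_h_of_ne_zero {k l : V} (h : M.h k l ≠ 0) : ‖M.h k l‖ = 1 := by
  rcases M.entries k l with h0 | h0 | h0 | h0 <;> simp_all

theorem norm_RH_sq (k l : V) :
    ‖M.RH k l‖ ^ 2 = if M.h k l ≠ 0 then ((M.deg k : ℝ) * (M.deg l : ℝ))⁻¹ else 0 := by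
  by_cases h : M.h k l = 0
  · simp [RH, h]
  simp only [RH, norm_div, M.norm_h_of_ne_zero h, Complex.norm_real, Real.norm_eq_abs,
    abs_mul, abs_of_nonneg (Real.sqrt_nonneg _), if_pos h, one_div, inv_pow, mul_pow,
    Real.sq_sqrt (Nat.cast_nonneg _)]

end MixedGraph

/-- with `α = minᵢ |μᵢ|` and `β = maxᵢ |μᵢ| = max{μ₁, |μₙ|}`, if
`α + β > 0` then `E_{R_H}(M) ≥ (2R₋₁(M_U) + nαβ)/(α + β)`. -/
theorem energyRH_ge_of_min_max {V : Type} [Fintype V] [DecidableEq V]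
    (M : MixedGraph V) (α β : ℝ)
    (hα : IsLeast (Set.range fun i => |M.RH_isHermitian.eigenvalues i|) α)
    (hβ : IsGreatest (Set.range fun i => |M.RH_isHermitian.eigenvalues i|) β)
    (hpos : 0 < α + β) :
    (2 * M.Rm1 + (Fintype.card V : ℝ) * α * β) / (α + β) ≤ M.energyRH := by
  rw [div_le_iff₀ hpos, ← M.sum_sq_eigenvalues_RH, mul_comm M.energyRH, MixedGraph.energyRH]
  exact sum_sq_add_card_mul_le_mul_sum_abs _ (fun i => hα.2 ⟨i, rfl⟩) (fun i => hβ.2 ⟨i, rfl⟩)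
end
end

section
/- Let M be a mixed graph with an edge (or arc) e between vertices u and v such that e is a cut-edge of the underlying graph M_U. Let M_1 be obtained from M by replacing e with an undirected edge, or with an arc u→v or v→u. Then R_H(M) and R_H(M_1) have the same characteristic polynomial, hence the same spectrum and the same Hermitian-Randić energy. -/
open Matrix BigOperators

noncomputable section
open scoped Classical

/-! If `d : V → ℂ` is unimodular and `H(M₁) = diag(d̄) H(M) diag(d)`, then `M` and `M₁` have the
same degrees and `R_H(M₁)` is unitarily similar to `R_H(M)`. When `uv` is a cut-edge, take `d = 1`
on the component of `u` in `M_U - uv` and `d = H(M₁)_{uv} / H(M)_{uv}` on the rest: `uv` is the only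
edge between the two sides, so this switching changes `H(M)` exactly at `uv` and `vu`. -/

theorem Matrix.charpoly_mul_mul_of_mul_eq_one {n R : Type*} [Fintype n] [DecidableEq n]
    [CommRing R] {P Q : Matrix n n R} (hPQ : P * Q = 1) (A : Matrix n n R) :
    (Q * A * P).charpoly = A.charpoly := by
  rw [charpoly_mul_comm, ← mul_assoc, hPQ, one_mul]

namespace MixedGraph

variable {V : Type} [Fintype V] [DecidableEq V]

theorem star_mul_self_of_ne_zero (M : MixedGraph V) {k l : V} (h : M.h k l ≠ 0) :
    star (M.h k l) * M.h k l = 1 := by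
  rcases M.entries k l with h0 | h1 | hI | hI <;>
    simp_all [Complex.conj_I]

section Switching

variable {M M₁ : MixedGraph V} {d : V → ℂ}

theorem deg_eq_of_switching (hd : ∀ k, d k ≠ 0)
    (hsw : ∀ k l, M₁.h k l = star (d k) * M.h k l * d l) (k : V) :
    M₁.deg k = M.deg k := by
  unfold deg
  congr 1
  refine Finset.filter_congr fun l _ => ?_
  simp [hsw, hd]

theorem RH_eq_of_switching (hd : ∀ k, d k ≠ 0)
    (hsw : ∀ k l, M₁.h k l = star (d k) * M.h k l * d l) :
    M₁.RH = diagonal (star d) * M.RH * diagonal d := by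
  ext k l
  simp only [mul_diagonal, diagonal_mul, RH, deg_eq_of_switching hd hsw, hsw, Pi.star_apply]
  ring

theorem charpoly_RH_eq_of_switching (hd : ∀ k, star (d k) * d k = 1)
    (hsw : ∀ k l, M₁.h k l = star (d k) * M.h k l * d l) :
    M₁.RH.charpoly = M.RH.charpoly := by
  have hunitary : diagonal d * diagonal (star d) = 1 := by
    rw [diagonal_mul_diagonal, ← diagonal_one]
    exact congrArg diagonal (funext fun k => (mul_comm _ _).trans (hd k))
  rw [RH_eq_of_switching (fun k => right_ne_zero_of_mul_eq_one (hd k)) hsw,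
    charpoly_mul_mul_of_mul_eq_one hunitary]

end Switching

theorem exists_switching_of_cut (M M₁ : MixedGraph V) {u v : V}
    (huv : M.h u v ≠ 0) (h₁uv : M₁.h u v ≠ 0)
    (hagree : ∀ k l, ¬(k = u ∧ l = v) → ¬(k = v ∧ l = u) → M₁.h k l = M.h k l)
    {S : Set V} (hu : u ∈ S) (hv : v ∉ S)
    (hS : ∀ k l, (M.underlying.deleteEdges {s(u, v)}).Adj k l → (k ∈ S ↔ l ∈ S)) :
    ∃ d : V → ℂ, (∀ k, star (d k) * d k = 1) ∧
      ∀ k l, M₁.h k l = star (d k) * M.h k l * d l := by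
  set c := M₁.h u v / M.h u v with hc_def
  have hc : star c * c = 1 := by
    rw [hc_def, star_div₀, div_mul_div_comm, M₁.star_mul_self_of_ne_zero h₁uv,
      M.star_mul_self_of_ne_zero huv, div_one]
  refine ⟨fun k => if k ∈ S then 1 else c, fun k => ?_, fun k l => ?_⟩
  · dsimp only
    split_ifs <;> simp only [star_one, mul_one, hc]
  dsimp only
  by_cases hkl : k = u ∧ l = v
  · obtain ⟨rfl, rfl⟩ := hkl
    simp only [hu, hv, if_true, if_false, star_one, one_mul, hc_def]
    exact (mul_div_cancel₀ _ huv).symm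
  by_cases hlk : k = v ∧ l = u
  · obtain ⟨rfl, rfl⟩ := hlk
    rw [← M₁.herm.apply, ← M.herm.apply]
    simp [hu, hv, hc_def, huv]
  rw [hagree k l hkl hlk]
  by_cases h0 : M.h k l = 0
  · simp [h0]
  have hSkl : k ∈ S ↔ l ∈ S := hS k l (by simp [underlying, h0, hkl, hlk])
  by_cases hk : k ∈ S
  · simp [hk, hSkl.mp hk]
  · simp only [hk, hSkl.not.mp hk, if_false]
    rw [mul_right_comm, hc, one_mul]

end MixedGraph

/-- if `e = uv` is a cut-edge of the underlying graph, replacing the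
edge/arc between `u` and `v` by an undirected edge or an arc (in either direction)
does not change the characteristic polynomial of `R_H`, hence neither the spectrum
nor the Hermitian–Randić energy. -/
theorem charpoly_energy_invariant_of_bridge {V : Type} [Fintype V] [DecidableEq V]
    (M M₁ : MixedGraph V) (u v : V)
    (huv : M.h u v ≠ 0)
    (hbridge : s(u, v) ∈ M.underlying.edgeSet ∧ M.underlying.IsBridge s(u, v))
    (h₁uv : M₁.h u v ≠ 0)
    (hagree : ∀ k l, ¬(k = u ∧ l = v) → ¬(k = v ∧ l = u) → M₁.h k l = M.h k l) :
    M.RH.charpoly = M₁.RH.charpoly ∧ M₁.energyRH = M.energyRH := by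
  obtain ⟨d, hd, hsw⟩ := M.exists_switching_of_cut M₁ huv h₁uv hagree
    (S := {k | (M.underlying.deleteEdges {s(u, v)}).Reachable u k})
    (SimpleGraph.Reachable.refl u) hbridge.2
    (fun k l hkl => ⟨fun h => h.trans hkl.reachable, fun h => h.trans hkl.symm.reachable⟩)
  have hcharpoly := MixedGraph.charpoly_RH_eq_of_switching hd hsw
  refine ⟨hcharpoly.symm, ?_⟩
  unfold MixedGraph.energyRH
  rw [(M₁.RH_isHermitian.eigenvalues_eq_eigenvalues_iff M.RH_isHermitian).mpr hcharpoly]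
end
end

section
/- Let T be a mixed tree with underlying tree T_U. Then the Hermitian-Randić energy of T equals the Randić energy of T_U; in particular, E_{R_H}(T) does not depend on which edges are oriented or on the choice of orientations. -/
open Matrix BigOperators

noncomputable section
open scoped Classical

/-- The Randić matrix of a simple graph (over ℂ, with real entries). -/
def randicMatrix {V : Type} [Fintype V] [DecidableEq V] (G : SimpleGraph V) :
    Matrix V V ℂ :=
  fun k l => if G.Adj k l
    then ((Real.sqrt (G.degree k) * Real.sqrt (G.degree l) : ℝ) : ℂ)⁻¹ else 0

theorem randicMatrix_isHermitian {V : Type} [Fintype V] [DecidableEq V]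
    (G : SimpleGraph V) : (randicMatrix G).IsHermitian := by
  ext k l
  simp only [randicMatrix, Matrix.conjTranspose_apply]
  by_cases h : G.Adj k l
  · rw [if_pos h, if_pos h.symm, mul_comm (Real.sqrt (G.degree l))]
    simp [← Complex.ofReal_inv]
  · rw [if_neg (fun hh : G.Adj l k => h hh.symm), if_neg h, star_zero]

/-- The Randić energy of a simple graph. -/
def randicEnergy {V : Type} [Fintype V] [DecidableEq V] (G : SimpleGraph V) : ℝ :=
  ∑ i, |(randicMatrix_isHermitian G).eigenvalues i|

/-!
On a tree every edge gain `g` with `g a b * g b a = 1` is a coboundary: rooting the tree at `r`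
and letting `φ v` be the product of the gains along the path from `r` to `v`, every edge satisfies
`g a b = φ b / φ a`. The entries of a mixed graph are such a gain, since `h b a = conj (h a b)`
and `|h a b| = 1` on edges. Hence `diagonal φ * R_H(T) * diagonal φ⁻¹ = R(T_U)`, so the two
Hermitian matrices have the same characteristic polynomial and therefore the same eigenvalues.
-/

namespace SimpleGraph

variable {V K : Type*} {G : SimpleGraph V}

def Walk.gain [CommMonoid K] (g : V → V → K) {u v : V} (p : G.Walk u v) : K :=
  (p.darts.map fun d => g d.fst d.snd).prod

@[simp]
lemma Walk.gain_concat [CommMonoid K] (g : V → V → K) {u v w : V} (p : G.Walk u v)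
    (h : G.Adj v w) : (p.concat h).gain g = p.gain g * g v w := by
  simp [Walk.gain, Walk.darts_concat]

lemma Walk.gain_ne_zero [CommMonoidWithZero K] [NoZeroDivisors K] [Nontrivial K]
    {g : V → V → K} (hg : ∀ a b, G.Adj a b → g a b ≠ 0) {u v : V} (p : G.Walk u v) :
    p.gain g ≠ 0 := by
  simp only [Walk.gain, ne_eq, List.prod_eq_zero_iff, List.mem_map, not_exists, not_and]
  exact fun d _ => hg _ _ d.adj

lemma IsAcyclic.eq_concat_or_eq_concat (hG : G.IsAcyclic) {u v w : V} {p : G.Walk u v}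
    {q : G.Walk u w} (hp : p.IsPath) (hq : q.IsPath) (hadj : G.Adj v w) :
    q = p.concat hadj ∨ p = q.concat hadj.symm := by
  by_cases hv : v ∈ q.support
  · exact .inl (hG.path_concat hp hq hadj hv)
  · exact .inr (hG.path_concat hq hp hadj.symm
      (hG.mem_support_of_ne_mem_support_of_adj_of_isPath hp hq hadj hv))

theorem IsTree.exists_gain_eq_div [CommGroupWithZero K] (hG : G.IsTree) (g : V → V → K)
    (hg : ∀ a b, G.Adj a b → g a b * g b a = 1) :
    ∃ φ : V → K, (∀ v, φ v ≠ 0) ∧ ∀ a b, G.Adj a b → g a b = φ b / φ a := by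
  classical
  obtain ⟨r⟩ := hG.connected.nonempty
  have hg0 : ∀ a b, G.Adj a b → g a b ≠ 0 := fun a b h =>
    left_ne_zero_of_mul_eq_one (hg a b h)
  let P : ∀ v, G.Path r v := fun v => (hG.connected r v).some.toPath
  let φ : V → K := fun v => (P v : G.Walk r v).gain g
  have hφ : ∀ v, φ v ≠ 0 := fun v => Walk.gain_ne_zero hg0 _
  refine ⟨φ, hφ, fun a b hab => ?_⟩
  rcases hG.isAcyclic.eq_concat_or_eq_concat (P a).2 (P b).2 hab with h | h
  · have hb : φ b = φ a * g a b := by simp only [φ, h, Walk.gain_concat]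
    rw [hb, mul_div_cancel_left₀ _ (hφ a)]
  · have ha : φ a = φ b * g b a := by simp only [φ, h, Walk.gain_concat]
    rw [ha, eq_div_iff (mul_ne_zero (hφ b) (hg0 b a hab.symm)), mul_left_comm, hg a b hab,
      mul_one]

end SimpleGraph

namespace Matrix

variable {n R : Type*} [Fintype n] [DecidableEq n] [CommRing R]

lemma charpoly_diagonal_mul_mul_diagonal {φ ψ : n → R} (hφψ : ∀ i, ψ i * φ i = 1)
    (A : Matrix n n R) : (diagonal φ * A * diagonal ψ).charpoly = A.charpoly := by
  rw [charpoly_mul_comm, ← mul_assoc, diagonal_mul_diagonal, funext hφψ, diagonal_one, one_mul]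

end Matrix

namespace MixedGraph

variable {V : Type} [Fintype V] [DecidableEq V]

lemma h_mul_h_swap (M : MixedGraph V) {k l : V} (hkl : M.h k l ≠ 0) : M.h k l * M.h l k = 1 := by
  rw [← M.herm.apply l k]
  rcases M.entries k l with h | h | h | h <;> simp [h, Complex.ext_iff] at hkl ⊢

lemma deg_eq_degree (M : MixedGraph V) (k : V) : M.deg k = M.underlying.degree k := by
  rw [deg, SimpleGraph.degree]
  congr 1
  ext l
  simp only [Finset.mem_filter, Finset.mem_univ, true_and, SimpleGraph.mem_neighborFinset]
  rfl

lemma randicMatrix_underlying_eq (M : MixedGraph V) {φ : V → ℂ} (hφ : ∀ v, φ v ≠ 0)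
    (hM : ∀ k l, M.underlying.Adj k l → M.h k l = φ l / φ k) :
    randicMatrix M.underlying = diagonal φ * M.RH * diagonal φ⁻¹ := by
  ext k l
  rw [mul_diagonal, diagonal_mul, RH, randicMatrix, ← deg_eq_degree, ← deg_eq_degree]
  by_cases hkl : M.underlying.Adj k l
  · rw [if_pos hkl, hM k l hkl, Pi.inv_apply]
    field_simp [hφ k, hφ l]
  · have h0 : M.h k l = 0 := not_not.mp hkl
    simp [hkl, h0]

end MixedGraph

/-- the Hermitian–Randić energy of a mixed tree equals the Randić
energy of its underlying tree (hence is independent of the orientation). -/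
theorem energyRH_tree_eq_randicEnergy {V : Type} [Fintype V] [DecidableEq V]
    (T : MixedGraph V) (hTree : T.underlying.IsTree) :
    T.energyRH = randicEnergy T.underlying := by
  obtain ⟨φ, hφ, hTφ⟩ := hTree.exists_gain_eq_div T.h fun _ _ hkl => T.h_mul_h_swap hkl
  have hcharpoly : T.RH.charpoly = (randicMatrix T.underlying).charpoly := by
    rw [T.randicMatrix_underlying_eq hφ hTφ,
      charpoly_diagonal_mul_mul_diagonal (ψ := φ⁻¹) fun v => inv_mul_cancel₀ (hφ v)]
  rw [MixedGraph.energyRH, randicEnergy,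
    (T.RH_isHermitian.eigenvalues_eq_eigenvalues_iff (randicMatrix_isHermitian _)).mpr hcharpoly]
end
end
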